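/- arXiv:1509.03262 — 4 statements merged into one kernel-verified Lean document; each statement's English description precedes it below -/
import Mathlib

section
/- Assume 2s̄ ≤ p. The following are equivalent: (a) the system is 2s̄-sparse τ-observable; (b) for every input sequence u ∈ U^{τ−1}, every actual state x* ∈ X, every attack E* with |supp(E*)| ≤ s̄ (with measurements Y_i = H_{u,i}(x*) + E*_i and attack indicator b*), and every pair (x,b) ∈ X × {0,1}^p satisfying the formula φ, one has x = x* and supp(b*) ⊆ supp(b). -/
/-- Trajectory of the discrete-time system `x_{j+1} = f (x_j) (u_j)` started at `x`. -/
def traj {X U : Type*} (f : X → U → X) (u : ℕ → U) (x : X) : ℕ → X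
  | 0 => x
  | j + 1 => f (traj f u x j) (u j)

/-- Window measurement map of sensor `i` over a window of length `τ`:
`H_{u,i}(x) = (h_i(x₀), …, h_i(x_{τ-1}))`. -/
def Hmap {X U : Type*} {p : ℕ} (f : X → U → X) (h : X → Fin p → ℝ) (τ : ℕ)
    (u : ℕ → U) (i : Fin p) (x : X) : Fin τ → ℝ :=
  fun j => h (traj f u x (j : ℕ)) i

/-!
If the true state `x*` is attacked on `s̄` sensors and a candidate `x` explains the data outside
another `s̄` sensors, then `x` and `x*` have the same measurements outside at most `2s̄` sensors,
so `2s̄`-sparse observability forces `x = x*`; an unflagged sensor then reads `H x* + E = H x*`,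
so it was not attacked. Conversely, two states with equal measurements outside a set `Γ` of
`2s̄` sensors are confused by the attack that, on half of `Γ`, shifts the measurements of one
state to those of the other.
-/

namespace SecureEstimation

variable {ι X M : Type*}

def SparseObservable (H : ι → X → M) (n : ℕ) : Prop :=
  ∀ Γ : Finset ι, Γ.card = n → Function.Injective (fun x (i : {i // i ∉ Γ}) => H i x)

def SecureAgainstSparseAttacks [AddGroup M] (H : ι → X → M) (s : ℕ) : Prop :=
  ∀ (xstar : X) (E Y : ι → M) (bstar : ι → Bool),
      (∀ i, Y i = H i xstar + E i) → (∀ i, bstar i = true ↔ E i ≠ 0) →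
      {i | E i ≠ 0}.ncard ≤ s →
      ∀ (x : X) (b : ι → Bool), (∀ i, b i = false → Y i = H i x) →
        {i | b i = true}.ncard ≤ s → x = xstar ∧ ∀ i, bstar i = true → b i = true

theorem SparseObservable.eq_of_eqOn_compl [Fintype ι] {H : ι → X → M} {n : ℕ}
    (hH : SparseObservable H n) (hn : n ≤ Fintype.card ι) {S : Set ι} (hS : S.ncard ≤ n)
    {x y : X} (hxy : ∀ i ∉ S, H i x = H i y) : x = y := by
  classical
  have hS' : S.toFinset.card ≤ n := by rwa [← Set.ncard_eq_toFinset_card']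
  obtain ⟨Γ, hSΓ, -, hΓ⟩ :=
    Finset.exists_subsuperset_card_eq (Finset.subset_univ _) hS' (by simpa using hn)
  refine hH Γ hΓ (funext fun ⟨i, hi⟩ => hxy i fun hiS => hi (hSΓ ?_))
  simpa using hiS

theorem SparseObservable.secureAgainstSparseAttacks [Fintype ι] [AddGroup M] {H : ι → X → M}
    {s : ℕ} (hH : SparseObservable H (2 * s)) (hs : 2 * s ≤ Fintype.card ι) :
    SecureAgainstSparseAttacks H s := by
  intro xstar E Y bstar hY hbstar hE x b hb hbcard
  have hx : x = xstar := by
    refine hH.eq_of_eqOn_compl hs (S := {i | E i ≠ 0} ∪ {i | b i = true}) ?_ fun i hi => ?_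
    · calc _ ≤ {i | E i ≠ 0}.ncard + {i | b i = true}.ncard := Set.ncard_union_le _ _
        _ ≤ 2 * s := by omega
    · simp only [Set.mem_union, Set.mem_ofPred_eq, not_or, not_not, Bool.not_eq_true] at hi
      rw [← hb i hi.2, hY i, hi.1, add_zero]
  refine ⟨hx, fun i hbi => ?_⟩
  by_contra hi
  have hEi : H i xstar + E i = H i xstar := by
    rw [← hY i, hb i (by simpa using hi), hx]
  exact (hbstar i).mp hbi (add_eq_left.mp hEi)

theorem SecureAgainstSparseAttacks.sparseObservable [AddGroup M] {H : ι → X → M} {s : ℕ}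
    (hsecure : SecureAgainstSparseAttacks H s) :
    SparseObservable H (2 * s) := by
  classical
  intro Γ hΓ x₁ x₂ hx
  have hagree (i : ι) (hi : i ∉ Γ) : H i x₁ = H i x₂ := congrFun hx ⟨i, hi⟩
  obtain ⟨Γ₁, hΓ₁Γ, hΓ₁⟩ := Finset.exists_subset_card_eq (show s ≤ Γ.card by omega)
  have hΓ₂ : (Γ \ Γ₁).card = s := by rw [Finset.card_sdiff_of_subset hΓ₁Γ]; omega
  let E : ι → M := fun i => if i ∈ Γ₁ then -H i x₂ + H i x₁ else 0
  have hEsupp : {i | E i ≠ 0} ⊆ Γ₁ := fun i hi => by_contra fun hiΓ₁ => hi (if_neg hiΓ₁)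
  refine (hsecure x₂ E (fun i => H i x₂ + E i) (fun i => decide (E i ≠ 0)) (fun _ => rfl)
    (fun _ => decide_eq_true_iff) ?_ x₁ (fun i => decide (i ∈ Γ \ Γ₁)) (fun i hi => ?_) ?_).1
  · calc _ ≤ (Γ₁ : Set ι).ncard := Set.ncard_le_ncard hEsupp Γ₁.finite_toSet
      _ = s := by rw [Set.ncard_coe_finset, hΓ₁]
  · by_cases hiΓ₁ : i ∈ Γ₁
    · simp only [E, if_pos hiΓ₁, add_neg_cancel_left]
    · have hiΓ : i ∉ Γ := fun hiΓ => by simp_all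
      simp only [E, if_neg hiΓ₁, add_zero, hagree i hiΓ]
  · have hsupp : {i | decide (i ∈ Γ \ Γ₁) = true} = ((Γ \ Γ₁ : Finset ι) : Set ι) := by
      ext; simp
    rw [hsupp, Set.ncard_coe_finset, hΓ₂]

theorem sparseObservable_iff_secureAgainstSparseAttacks [Fintype ι] [AddGroup M]
    (H : ι → X → M) {s : ℕ} (hs : 2 * s ≤ Fintype.card ι) :
    SparseObservable H (2 * s) ↔ SecureAgainstSparseAttacks H s :=
  ⟨fun hH => hH.secureAgainstSparseAttacks hs, SecureAgainstSparseAttacks.sparseObservable⟩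

end SecureEstimation

theorem stmt1_general {X U : Type*} {p τ sbar : ℕ} (hp : 2 * sbar ≤ p)
    (f : X → U → X) (h : X → Fin p → ℝ) :
    (∀ (u : ℕ → U) (Γ : Finset (Fin p)), Γ.card = 2 * sbar →
      Function.Injective
        (fun x : X => fun i : {i : Fin p // i ∉ Γ} => Hmap f h τ u i.1 x))
    ↔
    (∀ (u : ℕ → U) (xstar : X) (Estar : Fin p → Fin τ → ℝ)
        (Y : Fin p → Fin τ → ℝ) (bstar : Fin p → Bool),
      (∀ i, Y i = Hmap f h τ u i xstar + Estar i) →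
      (∀ i, bstar i = true ↔ Estar i ≠ 0) →
      Set.ncard {i : Fin p | Estar i ≠ 0} ≤ sbar →
      ∀ (x : X) (b : Fin p → Bool),
        (∀ i, b i = false → Y i = Hmap f h τ u i x) →
        Set.ncard {i : Fin p | b i = true} ≤ sbar →
        x = xstar ∧ ∀ i, bstar i = true → b i = true) :=
  forall_congr' fun u =>
    SecureEstimation.sparseObservable_iff_secureAgainstSparseAttacks (fun i => Hmap f h τ u i)
      (by simpa using hp)

/-- `2s̄`-sparse `τ`-observability is equivalent to correct secure
state reconstruction under every `s̄`-sparse attack. -/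
theorem stmt1 {X U : Type*} {p τ sbar : ℕ} (hτ : 1 ≤ τ) (hp : 2 * sbar ≤ p)
    (f : X → U → X) (h : X → Fin p → ℝ) :
    (∀ (u : ℕ → U) (Γ : Finset (Fin p)), Γ.card = 2 * sbar →
      Function.Injective
        (fun x : X => fun i : {i : Fin p // i ∉ Γ} => Hmap f h τ u i.1 x))
    ↔
    (∀ (u : ℕ → U) (xstar : X) (Estar : Fin p → Fin τ → ℝ)
        (Y : Fin p → Fin τ → ℝ) (bstar : Fin p → Bool),
      (∀ i, Y i = Hmap f h τ u i xstar + Estar i) →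
      (∀ i, bstar i = true ↔ Estar i ≠ 0) →
      Set.ncard {i : Fin p | Estar i ≠ 0} ≤ sbar →
      ∀ (x : X) (b : Fin p → Bool),
        (∀ i, b i = false → Y i = Hmap f h τ u i x) →
        Set.ncard {i : Fin p | b i = true} ≤ sbar →
        x = xstar ∧ ∀ i, bstar i = true → b i = true) :=
  stmt1_general hp f h
end

section
/- (Sufficiency direction of the main theorem.) Assume 2s̄ ≤ p and that the system is 2s̄-sparse τ-observable. Fix an input sequence u, an actual state x* ∈ X, and an attack E* with |supp(E*)| ≤ s̄, giving measurements Y_i = H_{u,i}(x*) + E*_i and attack indicator b*. Then every pair (x,b) ∈ X × {0,1}^p satisfying the formula φ has x = x* and supp(b*) ⊆ supp(b). -/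
/-- sufficiency of `2s̄`-sparse `τ`-observability. -/
theorem stmt2 {X U : Type*} {p τ sbar : ℕ} (hτ : 1 ≤ τ) (hp : 2 * sbar ≤ p)
    (f : X → U → X) (h : X → Fin p → ℝ)
    (hobs : ∀ (u : ℕ → U) (Γ : Finset (Fin p)), Γ.card = 2 * sbar →
      Function.Injective
        (fun x : X => fun i : {i : Fin p // i ∉ Γ} => Hmap f h τ u i.1 x))
    (u : ℕ → U) (xstar : X) (Estar : Fin p → Fin τ → ℝ)
    (Y : Fin p → Fin τ → ℝ) (bstar : Fin p → Bool)
    (hY : ∀ i, Y i = Hmap f h τ u i xstar + Estar i)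
    (hbstar : ∀ i, bstar i = true ↔ Estar i ≠ 0)
    (hE : Set.ncard {i : Fin p | Estar i ≠ 0} ≤ sbar)
    (x : X) (b : Fin p → Bool)
    (hphi1 : ∀ i, b i = false → Y i = Hmap f h τ u i x)
    (hphi2 : Set.ncard {i : Fin p | b i = true} ≤ sbar) :
    x = xstar ∧ ∀ i, bstar i = true → b i = true := by
  classical
  have hA : (Finset.univ.filter fun i => Estar i ≠ 0).card ≤ sbar := by
    have : {i : Fin p | Estar i ≠ 0}.ncard
        = (Finset.univ.filter fun i => Estar i ≠ 0).card := by
      rw [← Set.ncard_coe_finset]; congr 1; ext i; simp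
    omega
  have hB : (Finset.univ.filter fun i => b i = true).card ≤ sbar := by
    have : {i : Fin p | b i = true}.ncard
        = (Finset.univ.filter fun i => b i = true).card := by
      rw [← Set.ncard_coe_finset]; congr 1; ext i; simp
    omega
  set S := (Finset.univ.filter fun i => Estar i ≠ 0) ∪
      (Finset.univ.filter fun i => b i = true) with hS
  have hScard : S.card ≤ 2 * sbar :=
    le_trans (Finset.card_union_le _ _) (by omega)
  obtain ⟨Γ, hSΓ, _, hΓcard⟩ := Finset.exists_subsuperset_card_eq
    (S.subset_univ) hScard (by simpa using hp)
  have hxx : x = xstar := by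
    apply hobs u Γ hΓcard
    funext i
    have hiS : i.1 ∉ S := fun hmem => i.2 (hSΓ hmem)
    have hE0 : Estar i.1 = 0 := by
      by_contra hc
      exact hiS (Finset.mem_union_left _ (by simp [hc]))
    have hb0 : b i.1 = false := by
      rcases Bool.eq_false_or_eq_true (b i.1) with h'|h'
      · exact absurd (Finset.mem_union_right _ (by simp [h'])) hiS
      · exact h'
    have h1 := hphi1 i.1 hb0
    have h2 := hY i.1
    simp only [hE0, add_zero] at h2
    show Hmap f h τ u i.1 x = Hmap f h τ u i.1 xstar
    rw [← h1, h2]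
  refine ⟨hxx, fun i hbi => ?_⟩
  by_contra hc
  have hb0 : b i = false := by
    rcases Bool.eq_false_or_eq_true (b i) with h'|h'
    · simp_all
    · exact h'
  have h1 := hphi1 i hb0
  have h2 := hY i
  have : Estar i = 0 := by
    have := h1.symm.trans h2
    rw [hxx] at this
    have := congrArg (fun v => v - Hmap f h τ u i xstar) this
    simpa using this.symm
  exact (hbstar i).mp hbi this
end

section
/- (Necessity direction of the main theorem.) Assume 2s̄ ≤ p. Suppose the system is not 2s̄-sparse τ-observable, i.e., there exist an input sequence u ∈ U^{τ−1} and a set Γ ⊆ {1,…,p} with |Γ| = 2s̄ such that the map H_{u,Γ̄} is not injective. Then there exist an actual state x* ∈ X, an attack E* with |supp(E*)| ≤ s̄ (giving measurements Y_i = H_{u,i}(x*) + E*_i), and a pair (x,b) ∈ X × {0,1}^p satisfying the formula φ with x ≠ x*. -/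
/-! If two states `x₁ ≠ x₂` produce the same measurements outside a set `Γ` of `2s̄` sensors,
split `Γ = Γ₁ ∪ Γ₂` into two halves of size `s̄`. An attacker corrupting the sensors of `Γ₁`
makes the measurements of `x₁` agree with those of `x₂` outside `Γ₂`, so `(x₂, 𝟙_{Γ₂})` is
consistent with the data although the true state is `x₁`. -/

section Attack

variable {ι X V : Type*} [DecidableEq ι] [AddCommGroup V]

def attackToward (H : ι → X → V) (Γ₁ : Finset ι) (x₁ x₂ : X) (i : ι) : V :=
  if i ∈ Γ₁ then H i x₂ - H i x₁ else 0

theorem setOf_attackToward_ne_zero_subset (H : ι → X → V) (Γ₁ : Finset ι) (x₁ x₂ : X) :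
    {i | attackToward H Γ₁ x₁ x₂ i ≠ 0} ⊆ Γ₁ := by
  intro i hi
  by_contra hiΓ₁
  exact hi (if_neg hiΓ₁)

theorem add_attackToward_eq {H : ι → X → V} {Γ₁ Γ : Finset ι} {x₁ x₂ : X}
    (heq : ∀ i ∉ Γ, H i x₁ = H i x₂) {i : ι} (hi : i ∉ Γ \ Γ₁) :
    H i x₁ + attackToward H Γ₁ x₁ x₂ i = H i x₂ := by
  by_cases hiΓ₁ : i ∈ Γ₁
  · simp [attackToward, hiΓ₁]
  · have hiΓ : i ∉ Γ := fun hiΓ => hi (Finset.mem_sdiff.2 ⟨hiΓ, hiΓ₁⟩)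
    simp [attackToward, hiΓ₁, heq i hiΓ]

end Attack

theorem ncard_setOf_decide_mem {ι : Type*} [DecidableEq ι] (s : Finset ι) :
    {i | decide (i ∈ s) = true}.ncard = s.card := by
  simp only [decide_eq_true_eq]
  exact Set.ncard_coe_finset s

theorem stmt3_general {X U : Type*} {p τ sbar : ℕ}
    (f : X → U → X) (h : X → Fin p → ℝ)
    (u : ℕ → U) (Γ : Finset (Fin p)) (hΓ : Γ.card = 2 * sbar)
    (hninj : ¬ Function.Injective
      (fun x : X => fun i : {i : Fin p // i ∉ Γ} => Hmap f h τ u i.1 x)) :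
    ∃ (xstar : X) (Estar : Fin p → Fin τ → ℝ) (x : X) (b : Fin p → Bool),
      Set.ncard {i : Fin p | Estar i ≠ 0} ≤ sbar ∧
      (∀ i, b i = false → Hmap f h τ u i xstar + Estar i = Hmap f h τ u i x) ∧
      Set.ncard {i : Fin p | b i = true} ≤ sbar ∧
      x ≠ xstar := by
  obtain ⟨x₁, x₂, heq, hne⟩ := Function.not_injective_iff.1 hninj
  have heq' : ∀ i ∉ Γ, Hmap f h τ u i x₁ = Hmap f h τ u i x₂ := fun i hi =>
    congrFun heq ⟨i, hi⟩
  obtain ⟨Γ₁, hΓ₁Γ, hΓ₁⟩ := Finset.exists_subset_card_eq (s := Γ) (n := sbar) (by omega)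
  refine ⟨x₁, attackToward (Hmap f h τ u) Γ₁ x₁ x₂, x₂, fun i => decide (i ∈ Γ \ Γ₁),
    ?_, fun i hi => add_attackToward_eq heq' (by simpa using hi), ?_, hne.symm⟩
  · calc _ ≤ (Γ₁ : Set (Fin p)).ncard :=
          Set.ncard_le_ncard (setOf_attackToward_ne_zero_subset _ _ _ _) Γ₁.finite_toSet
      _ = sbar := by rw [Set.ncard_coe_finset, hΓ₁]
  · rw [ncard_setOf_decide_mem, Finset.card_sdiff_of_subset hΓ₁Γ]
    omega

/-- necessity of `2s̄`-sparse `τ`-observability. -/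
theorem stmt3 {X U : Type*} {p τ sbar : ℕ} (hτ : 1 ≤ τ) (hp : 2 * sbar ≤ p)
    (f : X → U → X) (h : X → Fin p → ℝ)
    (u : ℕ → U) (Γ : Finset (Fin p)) (hΓ : Γ.card = 2 * sbar)
    (hninj : ¬ Function.Injective
      (fun x : X => fun i : {i : Fin p // i ∉ Γ} => Hmap f h τ u i.1 x)) :
    ∃ (xstar : X) (Estar : Fin p → Fin τ → ℝ) (x : X) (b : Fin p → Bool),
      Set.ncard {i : Fin p | Estar i ≠ 0} ≤ sbar ∧
      (∀ i, b i = false → Hmap f h τ u i xstar + Estar i = Hmap f h τ u i x) ∧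
      Set.ncard {i : Fin p | b i = true} ≤ sbar ∧
      x ≠ xstar :=
  stmt3_general f h u Γ hΓ hninj
end

section
/- (Existence of a small conflicting set of sensors.) Assume 2s̄ ≤ p and that the system is 2s̄-sparse τ-observable. Fix an input sequence u and measurement data Y_i ∈ ℝ^τ for i ∈ {1,…,p}, and let ℍ_i = {x ∈ X : Y_i = H_{u,i}(x)}. If I ⊆ {1,…,p} satisfies |I| > p − 2s̄ and ⋂_{i∈I} ℍ_i = ∅, then there exists a subset J ⊆ I with |J| ≤ p − 2s̄ + 1 such that ⋂_{i∈J} ℍ_i = ∅. -/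
/-!
Observability for `2 s̄` attacked sensors says that the data of any `p - 2 s̄` sensors determine
the state, so the consistency sets of any `p - 2 s̄` sensors meet in at most one point. Pick
`p - 2 s̄` sensors of `I`: either their consistency sets already have empty intersection, or they
meet in a single state `x`, and since `⋂_{i ∈ I} ℍ_i = ∅` some sensor of `I` is inconsistent
with `x`; adding it gives the conflicting set.
-/

open Finset Function

theorem exists_subset_card_le_biInter_eq_empty {ι X : Type*} (S : ι → Set X) {m : ℕ}
    (hS : ∀ K : Finset ι, K.card = m → (⋂ i ∈ K, S i).Subsingleton)
    {I : Finset ι} (hI : ⋂ i ∈ I, S i = ∅) :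
    ∃ J ⊆ I, J.card ≤ m + 1 ∧ ⋂ i ∈ J, S i = ∅ := by
  classical
  by_cases hcard : I.card ≤ m + 1
  · exact ⟨I, subset_rfl, hcard, hI⟩
  obtain ⟨K, hKI, hKcard⟩ := exists_subset_card_eq (show m ≤ I.card by omega)
  rcases (⋂ i ∈ K, S i).eq_empty_or_nonempty with hK | ⟨x, hx⟩
  · exact ⟨K, hKI, by omega, hK⟩
  obtain ⟨j, hjI, hxj⟩ : ∃ j ∈ I, x ∉ S j := by
    by_contra! hall
    have : x ∈ ⋂ i ∈ I, S i := Set.mem_iInter₂.mpr hall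
    simp [hI] at this
  refine ⟨insert j K, insert_subset hjI hKI, (card_insert_le _ _).trans (by omega), ?_⟩
  refine Set.eq_empty_of_forall_notMem fun y hy => ?_
  have hyK : y ∈ ⋂ i ∈ K, S i := Set.biInter_subset_biInter_left (by simp) hy
  have hyj : y ∈ S j := Set.mem_iInter₂.mp hy j (mem_insert_self j K)
  exact hxj (hS K hKcard hyK hx ▸ hyj)

theorem subsingleton_biInter_compl_of_injective {ι X V : Type*} [Fintype ι] [DecidableEq ι]
    (H : ι → X → V) (Y : ι → V) {Γ : Finset ι}
    (hinj : Injective fun x (i : {i // i ∉ Γ}) => H i.1 x) :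
    (⋂ i ∈ Γᶜ, {x | Y i = H i x}).Subsingleton := by
  intro x hx y hy
  simp only [Set.mem_iInter, Set.mem_ofPred_eq] at hx hy
  refine hinj (funext fun i => ?_)
  have hi : i.1 ∈ Γᶜ := mem_compl.mpr i.2
  exact (hx i hi).symm.trans (hy i hi)

theorem stmt9_general {X U : Type*} {p τ sbar : ℕ} (hp : 2 * sbar ≤ p)
    (f : X → U → X) (h : X → Fin p → ℝ)
    (hobs : ∀ (u : ℕ → U) (Γ : Finset (Fin p)), Γ.card = 2 * sbar →
      Function.Injective
        (fun x : X => fun i : {i : Fin p // i ∉ Γ} => Hmap f h τ u i.1 x))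
    (u : ℕ → U) (Y : Fin p → Fin τ → ℝ)
    (I : Finset (Fin p))
    (hempty : {x : X | ∀ i ∈ I, Y i = Hmap f h τ u i x} = ∅) :
    ∃ J ⊆ I, J.card ≤ p - 2 * sbar + 1 ∧
      {x : X | ∀ i ∈ J, Y i = Hmap f h τ u i x} = ∅ := by
  set S : Fin p → Set X := fun i => {x | Y i = Hmap f h τ u i x}
  have hset (J : Finset (Fin p)) : {x | ∀ i ∈ J, Y i = Hmap f h τ u i x} = ⋂ i ∈ J, S i := by
    ext; simp [S]
  have hS (K : Finset (Fin p)) (hK : K.card = p - 2 * sbar) : (⋂ i ∈ K, S i).Subsingleton := by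
    have hΓ : Kᶜ.card = 2 * sbar := by rw [card_compl, hK, Fintype.card_fin]; omega
    rw [← compl_compl K]
    exact subsingleton_biInter_compl_of_injective _ Y (hobs u Kᶜ hΓ)
  simp only [hset] at hempty ⊢
  exact exists_subset_card_le_biInter_eq_empty S hS hempty

/-- existence of a small conflicting set of sensors. -/
theorem stmt9 {X U : Type*} {p τ sbar : ℕ} (hτ : 1 ≤ τ) (hp : 2 * sbar ≤ p)
    (f : X → U → X) (h : X → Fin p → ℝ)
    (hobs : ∀ (u : ℕ → U) (Γ : Finset (Fin p)), Γ.card = 2 * sbar →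
      Function.Injective
        (fun x : X => fun i : {i : Fin p // i ∉ Γ} => Hmap f h τ u i.1 x))
    (u : ℕ → U) (Y : Fin p → Fin τ → ℝ)
    (I : Finset (Fin p)) (hI : p - 2 * sbar < I.card)
    (hempty : {x : X | ∀ i ∈ I, Y i = Hmap f h τ u i x} = ∅) :
    ∃ J ⊆ I, J.card ≤ p - 2 * sbar + 1 ∧
      {x : X | ∀ i ∈ J, Y i = Hmap f h τ u i x} = ∅ :=
  stmt9_general hp f h hobs u Y I hempty
end
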